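/- If G is a 4-regular claw-induced-saturated graph, then every edge of G lies in exactly one or exactly two triangles. -/

import Mathlib

open SimpleGraph

/-- `G` contains an induced copy of `H`. -/
def HasInducedCopy {W V : Type*} (H : SimpleGraph W) (G : SimpleGraph V) : Prop :=
  Nonempty (H ↪g G)

/-- `G` is `H`-induced-saturated: `G` has no induced copy of `H`, but deleting any edge
or adding any non-edge creates an induced copy of `H`. -/
def IsIndSat {V W : Type*} (G : SimpleGraph V) (H : SimpleGraph W) : Prop :=
  ¬ HasInducedCopy H G ∧
  (∀ u v : V, G.Adj u v → HasInducedCopy H (G.deleteEdges {s(u, v)})) ∧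
  (∀ u v : V, u ≠ v → ¬ G.Adj u v →
    HasInducedCopy H (G ⊔ SimpleGraph.fromEdgeSet {s(u, v)}))

/-- The claw `K_{1,3}`: star with center `0` and leaves `1, 2, 3`. -/
def claw : SimpleGraph (Fin 4) :=
  SimpleGraph.fromRel (fun i _ => i = 0)

/-!
Deleting an edge `uv` of a claw-free graph can only create an induced claw two of whose leaves
are `u` and `v`. Its centre `x` is then a common neighbour of `u` and `v`, and its third leaf `w`
is a neighbour of `x` adjacent to neither. So every edge lies in a triangle. In a 4-regular graph
an edge `uv` lies in at most three triangles, and in exactly three only if `u` and `v` are closed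
twins. That is impossible: for a common neighbour `a`, the claw obtained by deleting `au` has a
centre `y` and a third leaf `w` with `N(y) = {a, u, v, w}`, so the claw obtained by deleting `yw`
would need a common neighbour of `y` and `w` in this set, while `w` is adjacent to none of it.
-/

open Finset

namespace SimpleGraph

variable {V : Type*} {G : SimpleGraph V}

lemma claw_adj (i j : Fin 4) : claw.Adj i j ↔ i ≠ j ∧ (i = 0 ∨ j = 0) := by
  simp [claw, fromRel_adj]

theorem hasInducedCopy_claw_iff :
    HasInducedCopy claw G ↔ ∃ x a b c, G.Adj x a ∧ G.Adj x b ∧ G.Adj x c ∧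
      a ≠ b ∧ a ≠ c ∧ b ≠ c ∧ ¬ G.Adj a b ∧ ¬ G.Adj a c ∧ ¬ G.Adj b c := by
  constructor
  · rintro ⟨f⟩
    have adj (i j : Fin 4) : G.Adj (f i) (f j) ↔ claw.Adj i j := f.map_adj_iff
    refine ⟨f 0, f 1, f 2, f 3, ?_, ?_, ?_, ?_, ?_, ?_, ?_, ?_, ?_⟩ <;>
      simp [adj, claw_adj, f.injective.ne_iff]
  · rintro ⟨x, a, b, c, hxa, hxb, hxc, hab, hac, hbc, nab, nac, nbc⟩
    have := hxa.ne; have := hxb.ne; have := hxc.ne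
    refine ⟨⟨⟨![x, a, b, c], ?_⟩, ?_⟩⟩
    · intro i j hij
      fin_cases i <;> fin_cases j <;> simp_all
    · intro i j
      change G.Adj (![x, a, b, c] i) (![x, a, b, c] j) ↔ claw.Adj i j
      fin_cases i <;> fin_cases j <;> simp_all [claw_adj, adj_comm]

/-- Deleting the edge `uv` turns the star with centre `x` and leaves `u, v, w` into an induced
claw. -/
def ClawWitness (G : SimpleGraph V) (u v : V) : Prop :=
  ∃ x w, G.Adj u x ∧ G.Adj v x ∧ G.Adj x w ∧ ¬ G.Adj u w ∧ ¬ G.Adj v w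

theorem ClawWitness.symm {u v : V} : G.ClawWitness u v → G.ClawWitness v u :=
  fun ⟨x, w, hux, hvx, hxw, huw, hvw⟩ => ⟨x, w, hvx, hux, hxw, hvw, huw⟩

theorem clawWitness_of_deleteEdges_of_adj {u v x a b c : V}
    (hxa : (G.deleteEdges {s(u, v)}).Adj x a) (hxb : (G.deleteEdges {s(u, v)}).Adj x b)
    (hxc : (G.deleteEdges {s(u, v)}).Adj x c) (hac : a ≠ c) (hbc : b ≠ c)
    (nab : ¬ (G.deleteEdges {s(u, v)}).Adj a b) (nac : ¬ (G.deleteEdges {s(u, v)}).Adj a c)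
    (nbc : ¬ (G.deleteEdges {s(u, v)}).Adj b c) (hab : G.Adj a b) : G.ClawWitness u v := by
  simp only [deleteEdges_adj, Set.mem_singleton_iff, not_and, not_not] at *
  have heq : s(a, b) = s(u, v) := nab hab
  have nac' : ¬ G.Adj a c := fun h => hbc (Sym2.congr_right.1 ((nac h).trans heq.symm)).symm
  have nbc' : ¬ G.Adj b c := fun h =>
    hac (Sym2.congr_right.1 ((nbc h).trans (heq.symm.trans Sym2.eq_swap))).symm
  have hw : G.ClawWitness a b := ⟨x, c, hxa.1.symm, hxb.1.symm, hxc.1, nac', nbc'⟩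
  rcases Sym2.eq_iff.1 heq with ⟨rfl, rfl⟩ | ⟨rfl, rfl⟩
  · exact hw
  · exact hw.symm

theorem clawWitness_of_deleteEdges {u v : V} (hG : ¬ HasInducedCopy claw G)
    (hdel : HasInducedCopy claw (G.deleteEdges {s(u, v)})) : G.ClawWitness u v := by
  obtain ⟨x, a, b, c, hxa, hxb, hxc, hab, hac, hbc, nab, nac, nbc⟩ :=
    hasInducedCopy_claw_iff.1 hdel
  have hle : G.deleteEdges {s(u, v)} ≤ G := deleteEdges_le _
  have hleaves : G.Adj a b ∨ G.Adj a c ∨ G.Adj b c := by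
    by_contra! hno
    exact hG (hasInducedCopy_claw_iff.2
      ⟨x, a, b, c, hle hxa, hle hxb, hle hxc, hab, hac, hbc, hno.1, hno.2.1, hno.2.2⟩)
  rcases hleaves with h | h | h
  · exact clawWitness_of_deleteEdges_of_adj hxa hxb hxc hac hbc nab nac nbc h
  · exact clawWitness_of_deleteEdges_of_adj hxa hxc hxb hab hbc.symm nac nab
      (fun h' => nbc h'.symm) h
  · exact clawWitness_of_deleteEdges_of_adj hxb hxc hxa hab.symm hac.symm nbc
      (fun h' => nab h'.symm) (fun h' => nac h'.symm) h

theorem IsIndSat.clawWitness {u v : V} (h : IsIndSat G claw) (huv : G.Adj u v) :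
    G.ClawWitness u v :=
  clawWitness_of_deleteEdges h.1 (h.2.1 u v huv)

variable [DecidableEq V] [G.LocallyFinite]

theorem inter_neighborFinset_subset_erase (u v : V) :
    G.neighborFinset u ∩ G.neighborFinset v ⊆ (G.neighborFinset u).erase v := by
  intro z hz
  simp only [mem_inter, mem_erase, mem_neighborFinset] at hz ⊢
  exact ⟨hz.2.ne', hz.1⟩

theorem erase_neighborFinset_ne_of_clawWitness
    (hW : ∀ p q, G.Adj p q → G.ClawWitness p q) (hdeg : ∀ y, G.degree y ≤ 4)
    {u v : V} (huv : G.Adj u v) :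
    (G.neighborFinset u).erase v ≠ (G.neighborFinset v).erase u := by
  intro htwin
  have twin (z : V) (hzu : z ≠ u) (hzv : z ≠ v) : G.Adj u z ↔ G.Adj v z := by
    simpa [hzu, hzv] using congrArg (z ∈ ·) htwin
  obtain ⟨a, -, hua, hva, -⟩ := hW u v huv
  obtain ⟨y, w, hay, huy, hyw, haw, huw⟩ := hW a u hua.symm
  have hwu : w ≠ u := by rintro rfl; exact haw hua.symm
  have hwv : w ≠ v := by rintro rfl; exact huw huv
  have hvw : ¬ G.Adj v w := fun h => huw ((twin w hwu hwv).2 h)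
  have hyv : y ≠ v := by rintro rfl; exact hvw hyw
  have hvy : G.Adj v y := (twin y huy.ne' hyv).1 huy
  have hNy : G.neighborFinset y = {a, u, v, w} := by
    have hsub : ({a, u, v, w} : Finset V) ⊆ G.neighborFinset y := by
      simp [insert_subset_iff, hay.symm, huy.symm, hvy.symm, hyw]
    have hcard : #({a, u, v, w} : Finset V) = 4 := by
      have haw' : a ≠ w := by rintro rfl; exact huw hua
      exact card_eq_four.2 ⟨a, u, v, w, hua.ne', hva.ne', haw', huv.ne, hwu.symm, hwv.symm, rfl⟩
    refine (eq_of_subset_of_card_le hsub ?_).symm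
    rw [card_neighborFinset_eq_degree, hcard]
    exact hdeg y
  obtain ⟨z, -, hyz, hwz, -⟩ := hW y w hyw
  have hz : z ∈ G.neighborFinset y := (mem_neighborFinset _ _ _).2 hyz
  simp only [hNy, mem_insert, mem_singleton] at hz
  rcases hz with rfl | rfl | rfl | rfl
  · exact haw hwz.symm
  · exact huw hwz.symm
  · exact hvw hwz.symm
  · exact G.irrefl hwz

end SimpleGraph

/-- In a 4-regular claw-induced-saturated graph, every edge lies in exactly
one or exactly two triangles (the number of common neighbors of its endpoints is 1 or 2). -/
theorem claw_indSat_four_regular_triangles {V : Type*} [Fintype V] [DecidableEq V]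
    (G : SimpleGraph V) [DecidableRel G.Adj]
    (hreg : ∀ v : V, G.degree v = 4) (h : IsIndSat G claw) :
    ∀ u v : V, G.Adj u v →
      (G.neighborFinset u ∩ G.neighborFinset v).card = 1 ∨
      (G.neighborFinset u ∩ G.neighborFinset v).card = 2 := by
  intro u v huv
  have hW : ∀ p q, G.Adj p q → G.ClawWitness p q := fun _ _ => h.clawWitness
  have hsub_u := G.inter_neighborFinset_subset_erase u v
  have hsub_v : G.neighborFinset u ∩ G.neighborFinset v ⊆ (G.neighborFinset v).erase u :=
    inter_comm (G.neighborFinset u) _ ▸ G.inter_neighborFinset_subset_erase v u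
  have hcard_u : #((G.neighborFinset u).erase v) = 3 := by
    rw [card_erase_of_mem ((mem_neighborFinset _ _ _).2 huv), card_neighborFinset_eq_degree, hreg]
  have hcard_v : #((G.neighborFinset v).erase u) = 3 := by
    rw [card_erase_of_mem ((mem_neighborFinset _ _ _).2 huv.symm),
      card_neighborFinset_eq_degree, hreg]
  have hpos : 0 < #(G.neighborFinset u ∩ G.neighborFinset v) := by
    obtain ⟨x, -, hux, hvx, -⟩ := hW u v huv
    exact card_pos.2 ⟨x, by simp [hux, hvx]⟩
  have hne3 : #(G.neighborFinset u ∩ G.neighborFinset v) ≠ 3 := fun h3 =>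
    G.erase_neighborFinset_ne_of_clawWitness hW (fun y => (hreg y).le) huv <| by
      rw [← eq_of_subset_of_card_le hsub_u (by omega), ← eq_of_subset_of_card_le hsub_v (by omega)]
  have hle := card_le_card hsub_u
  omega
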